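/- arXiv:2602.20846 — 2 statements merged into one kernel-verified Lean document; each statement's English description precedes it below -/
import Mathlib

section
/- If the operator norm of W plus one quarter of the product ‖w₁‖·‖w_out‖ is strictly less than 1, then the closed-loop reservoir map Φ is a contraction on ℝ^d with Lipschitz constant at most ‖W‖_op + (1/4)‖w₁‖‖w_out‖; hence Φ has a unique fixed point x*, and for every initial point x₀ the iterates Φ^t(x₀) converge to x* with ‖Φ^t(x₀) − x*‖ ≤ (‖W‖_op + (1/4)‖w₁‖‖w_out‖)^t · ‖x₀ − x*‖. -/
/-!
Write `Φ = tanh ∘ g` with `g x = W x + σ(⟪w_out, x⟫ + b_out) • w₁ + a_opp • w₂ + b`. Componentwise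
`tanh` is 1-Lipschitz on Euclidean space because `tanh' = 1 / cosh² ≤ 1`, and `σ' = σ (1 - σ) ≤ 1/4`
makes the feedback term `‖w₁‖ ‖w_out‖ / 4`-Lipschitz, so `Φ` is Lipschitz with constant
`K = ‖W‖ + ‖w₁‖ ‖w_out‖ / 4 < 1`. Banach's fixed point theorem gives the unique fixed point `x*`,
and the rate follows because `Φ^[t]` is `K^t`-Lipschitz and fixes `x*`.
-/

/-- The logistic sigmoid `σ(z) = 1/(1 + exp (-z))`. -/
noncomputable def logistic (z : ℝ) : ℝ := 1 / (1 + Real.exp (-z))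

/-- The closed-loop reservoir map on Euclidean `ℝ^d`, with `W` given as a (continuous)
linear map so that `‖W‖` is its operator norm on Euclidean space. -/
noncomputable def Phi (d : ℕ)
    (W : EuclideanSpace ℝ (Fin d) →L[ℝ] EuclideanSpace ℝ (Fin d))
    (w1 w2 b wout : EuclideanSpace ℝ (Fin d)) (bout aopp : ℝ)
    (x : EuclideanSpace ℝ (Fin d)) : EuclideanSpace ℝ (Fin d) :=
  WithLp.toLp 2 fun i => Real.tanh (W x i
    + logistic ((∑ j, wout j * x j) + bout) * w1 i + aopp * w2 i + b i)

open scoped NNReal RealInnerProductSpace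

namespace Real

theorem hasDerivAt_tanh (x : ℝ) : HasDerivAt tanh (1 / cosh x ^ 2) x := by
  have h := (hasDerivAt_sinh x).div (hasDerivAt_cosh x) (cosh_pos x).ne'
  rw [show sinh / cosh = tanh from funext fun y => (tanh_eq_sinh_div_cosh y).symm] at h
  exact h.congr_deriv (by rw [← cosh_sq_sub_sinh_sq x]; ring)

theorem lipschitzWith_tanh : LipschitzWith 1 tanh := by
  refine lipschitzWith_of_nnnorm_deriv_le (fun x => (hasDerivAt_tanh x).differentiableAt)
    fun x => ?_
  rw [← NNReal.coe_le_coe, coe_nnnorm, (hasDerivAt_tanh x).deriv, norm_of_nonneg (by positivity)]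
  have : 1 ≤ cosh x ^ 2 := one_le_pow₀ (one_le_cosh x)
  simpa using inv_le_one_of_one_le₀ this

theorem lipschitzWith_sigmoid : LipschitzWith 4⁻¹ sigmoid := by
  refine lipschitzWith_of_nnnorm_deriv_le differentiable_sigmoid fun x => ?_
  have hpos : 0 ≤ sigmoid x * (1 - sigmoid x) :=
    mul_nonneg (sigmoid_nonneg x) (sub_nonneg.2 (sigmoid_le_one x))
  rw [← NNReal.coe_le_coe, coe_nnnorm, deriv_sigmoid, norm_of_nonneg hpos]
  push_cast
  nlinarith [sq_nonneg (sigmoid x - 1 / 2)]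

end Real

theorem logistic_eq_sigmoid : logistic = Real.sigmoid := by
  funext z
  rw [logistic, Real.sigmoid_def, one_div]

theorem LipschitzWith.euclideanSpace_map {𝕜 ι : Type*} [RCLike 𝕜] [Fintype ι] {f : 𝕜 → 𝕜}
    {K : ℝ≥0} (hf : LipschitzWith K f) :
    LipschitzWith K fun x : EuclideanSpace 𝕜 ι => WithLp.toLp 2 fun i => f (x i) := by
  refine LipschitzWith.of_dist_le_mul fun x y => ?_
  simp only [EuclideanSpace.dist_eq]
  calc √(∑ i, dist (f (x i)) (f (y i)) ^ 2) ≤ √(∑ i, (K * dist (x i) (y i)) ^ 2) := by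
        gcongr with i
        exact hf.dist_le_mul _ _
    _ = K * √(∑ i, dist (x i) (y i) ^ 2) := by
        simp_rw [mul_pow, ← Finset.mul_sum]
        rw [Real.sqrt_mul (by positivity), Real.sqrt_sq K.coe_nonneg]

section Preactivation

variable {E : Type*} [NormedAddCommGroup E] [InnerProductSpace ℝ E]

noncomputable def reservoirPreactivation (W : E →L[ℝ] E) (w1 w2 b wout : E) (bout aopp : ℝ)
    (x : E) : E :=
  W x + Real.sigmoid (⟪wout, x⟫ + bout) • w1 + aopp • w2 + b

theorem lipschitzWith_reservoirPreactivation (W : E →L[ℝ] E) (w1 w2 b wout : E)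
    (bout aopp : ℝ) :
    LipschitzWith (‖W‖₊ + 4⁻¹ * ‖w1‖₊ * ‖wout‖₊)
      (reservoirPreactivation W w1 w2 b wout bout aopp) := by
  have hreadout : LipschitzWith (4⁻¹ * ‖wout‖₊) fun x : E => Real.sigmoid (⟪wout, x⟫ + bout) := by
    have hinner : LipschitzWith ‖wout‖₊ fun x : E => ⟪wout, x⟫ + bout := by
      have h := (innerSL ℝ wout).lipschitz.add (LipschitzWith.const (α := E) bout)
      rwa [add_zero,
        show ‖innerSL ℝ wout‖₊ = ‖wout‖₊ from Subtype.ext (innerSL_apply_norm ℝ wout)] at h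
    exact Real.lipschitzWith_sigmoid.comp hinner
  have hfeedback : LipschitzWith (‖w1‖₊ * (4⁻¹ * ‖wout‖₊))
      fun x : E => Real.sigmoid (⟪wout, x⟫ + bout) • w1 := by
    have h := (ContinuousLinearMap.toSpanSingleton ℝ w1).lipschitz.comp hreadout
    rw [ContinuousLinearMap.nnnorm_toSpanSingleton] at h
    exact h
  have h := (W.lipschitz.add hfeedback).add (LipschitzWith.const (α := E) (aopp • w2 + b))
  rw [add_zero, mul_left_comm, ← mul_assoc] at h
  rw [show reservoirPreactivation W w1 w2 b wout bout aopp = _ from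
    funext fun x => add_assoc _ _ _]
  exact h

end Preactivation

theorem Phi_eq_tanh_reservoirPreactivation (d : ℕ)
    (W : EuclideanSpace ℝ (Fin d) →L[ℝ] EuclideanSpace ℝ (Fin d))
    (w1 w2 b wout : EuclideanSpace ℝ (Fin d)) (bout aopp : ℝ) :
    Phi d W w1 w2 b wout bout aopp = fun x =>
      WithLp.toLp 2 fun i => Real.tanh (reservoirPreactivation W w1 w2 b wout bout aopp x i) := by
  funext x
  simp [Phi, reservoirPreactivation, logistic_eq_sigmoid, PiLp.inner_apply, mul_comm]

theorem lipschitzWith_Phi (d : ℕ)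
    (W : EuclideanSpace ℝ (Fin d) →L[ℝ] EuclideanSpace ℝ (Fin d))
    (w1 w2 b wout : EuclideanSpace ℝ (Fin d)) (bout aopp : ℝ) :
    LipschitzWith (‖W‖₊ + 4⁻¹ * ‖w1‖₊ * ‖wout‖₊) (Phi d W w1 w2 b wout bout aopp) := by
  rw [Phi_eq_tanh_reservoirPreactivation, ← one_mul (‖W‖₊ + _)]
  exact Real.lipschitzWith_tanh.euclideanSpace_map.comp
    (lipschitzWith_reservoirPreactivation W w1 w2 b wout bout aopp)

theorem stmt1_general (d : ℕ)
    (W : EuclideanSpace ℝ (Fin d) →L[ℝ] EuclideanSpace ℝ (Fin d))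
    (w1 w2 b wout : EuclideanSpace ℝ (Fin d)) (bout aopp : ℝ)
    (hcontr : ‖W‖ + (1 / 4) * ‖w1‖ * ‖wout‖ < 1) :
    (∀ x y : EuclideanSpace ℝ (Fin d),
      ‖Phi d W w1 w2 b wout bout aopp x - Phi d W w1 w2 b wout bout aopp y‖ ≤
        (‖W‖ + (1 / 4) * ‖w1‖ * ‖wout‖) * ‖x - y‖) ∧
    ∃ xstar : EuclideanSpace ℝ (Fin d),
      Phi d W w1 w2 b wout bout aopp xstar = xstar ∧
      (∀ y : EuclideanSpace ℝ (Fin d), Phi d W w1 w2 b wout bout aopp y = y → y = xstar) ∧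
      ∀ (x₀ : EuclideanSpace ℝ (Fin d)) (t : ℕ),
        ‖(Phi d W w1 w2 b wout bout aopp)^[t] x₀ - xstar‖ ≤
          (‖W‖ + (1 / 4) * ‖w1‖ * ‖wout‖) ^ t * ‖x₀ - xstar‖ := by
  set Φ := Phi d W w1 w2 b wout bout aopp
  have hK : ((‖W‖₊ + 4⁻¹ * ‖w1‖₊ * ‖wout‖₊ : ℝ≥0) : ℝ) = ‖W‖ + (1 / 4) * ‖w1‖ * ‖wout‖ := by
    simp [one_div]
  have hΦ := lipschitzWith_Phi d W w1 w2 b wout bout aopp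
  have hC : ContractingWith _ Φ := ⟨by rwa [← NNReal.coe_lt_one, hK], hΦ⟩
  refine ⟨fun x y => ?_, hC.fixedPoint, hC.fixedPoint_isFixedPt,
    fun y hy => hC.fixedPoint_unique hy, fun x₀ t => ?_⟩
  · simpa [dist_eq_norm, hK] using hΦ.dist_le_mul x y
  · have h := (hΦ.iterate t).dist_le_mul x₀ hC.fixedPoint
    rw [(hC.fixedPoint_isFixedPt.iterate t).eq] at h
    simpa [dist_eq_norm, hK] using h

/-- If `‖W‖_op + (1/4)‖w₁‖‖w_out‖ < 1` then `Φ` is a contraction on `ℝ^d`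
with Lipschitz constant at most `‖W‖_op + (1/4)‖w₁‖‖w_out‖`; hence `Φ` has a unique fixed
point `x*`, and for every initial point `x₀` the iterates `Φ^[t] x₀` converge to `x*` with
`‖Φ^[t] x₀ − x*‖ ≤ (‖W‖_op + (1/4)‖w₁‖‖w_out‖)^t · ‖x₀ − x*‖`. -/
theorem stmt1 (d : ℕ) (hd : 1 ≤ d)
    (W : EuclideanSpace ℝ (Fin d) →L[ℝ] EuclideanSpace ℝ (Fin d))
    (w1 w2 b wout : EuclideanSpace ℝ (Fin d)) (bout aopp : ℝ)
    (haopp : aopp ∈ Set.Icc (0 : ℝ) 1)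
    (hcontr : ‖W‖ + (1 / 4) * ‖w1‖ * ‖wout‖ < 1) :
    (∀ x y : EuclideanSpace ℝ (Fin d),
      ‖Phi d W w1 w2 b wout bout aopp x - Phi d W w1 w2 b wout bout aopp y‖ ≤
        (‖W‖ + (1 / 4) * ‖w1‖ * ‖wout‖) * ‖x - y‖) ∧
    ∃ xstar : EuclideanSpace ℝ (Fin d),
      Phi d W w1 w2 b wout bout aopp xstar = xstar ∧
      (∀ y : EuclideanSpace ℝ (Fin d), Phi d W w1 w2 b wout bout aopp y = y → y = xstar) ∧
      ∀ (x₀ : EuclideanSpace ℝ (Fin d)) (t : ℕ),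
        ‖(Phi d W w1 w2 b wout bout aopp)^[t] x₀ - xstar‖ ≤
          (‖W‖ + (1 / 4) * ‖w1‖ * ‖wout‖) ^ t * ‖x₀ - xstar‖ :=
  stmt1_general d W w1 w2 b wout bout aopp hcontr
end

section
/- Suppose the discomfort depends on the receptivity: let D : [α_min, 1] → [0, ∞) be L-Lipschitz, and define T(α) = clip(α + η↑(α₀ − α) − η↓·max(D(α) − θ, 0), α_min, 1). If η↓·L < η↑, then T is a contraction on [α_min, 1] with Lipschitz constant at most (1 − η↑) + η↓·L < 1, and hence T has a unique fixed point in [α_min, 1] to which all iterates converge. -/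
/-!
The unclipped update is the sum of `(1 - η↑)·α`, a constant, and `-η↓·[D(α) - θ]₊`; the first
moves by `(1 - η↑)|α - β|` and, the positive part being 1-Lipschitz, the last by at most
`η↓·L|α - β|`. Clipping is 1-Lipschitz and lands in `[α_min, 1]`, so `T` is a self-map of this
complete interval with constant `(1 - η↑) + η↓·L`, which is `< 1` exactly when `η↓·L < η↑`;
Banach's fixed point theorem finishes the proof.
-/

/-- Clipping to an interval: `clip z a b = min (max z a) b`. -/
def clip (z a b : ℝ) : ℝ := min (max z a) b

/-- The sentinel update with state-dependent discomfort `D(α)`: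
`T(α) = clip(α + η↑(α₀ − α) − η↓·[D(α) − θ]₊, α_min, 1)`. -/
def sentinelD (αmin α₀ ηup ηdown θ : ℝ) (D : ℝ → ℝ) (α : ℝ) : ℝ :=
  clip (α + ηup * (α₀ - α) - ηdown * max (D α - θ) 0) αmin 1

open Set Filter Topology NNReal Function

section FixedPoint

variable {α : Type*} [MetricSpace α] {f : α → α} {s : Set α} {K : ℝ≥0}

theorem LipschitzOnWith.eq_of_isFixedPt (hK : K < 1) (hf : LipschitzOnWith K f s)
    {x y : α} (hx : x ∈ s) (hy : y ∈ s) (hfx : IsFixedPt f x) (hfy : IsFixedPt f y) :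
    x = y := by
  have hxy := hf.dist_le_mul x hx y hy
  rw [hfx.eq, hfy.eq] at hxy
  have hK' : (K : ℝ) < 1 := hK
  exact dist_le_zero.1 (by nlinarith [dist_nonneg (x := x) (y := y)])

theorem LipschitzOnWith.exists_unique_isFixedPt_tendsto_iterate (hK : K < 1)
    (hf : LipschitzOnWith K f s) (hsc : IsComplete s) (hsf : MapsTo f s s) (hs : s.Nonempty) :
    ∃ x ∈ s, IsFixedPt f x ∧ (∀ y ∈ s, IsFixedPt f y → y = x) ∧
      ∀ y ∈ s, Tendsto (fun n ↦ f^[n] y) atTop (𝓝 x) := by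
  have hc : ContractingWith K (hsf.restrict f s s) := ⟨hK, hf.mapsToRestrict hsf⟩
  obtain ⟨x₀, hx₀⟩ := hs
  obtain ⟨x, hx, hfix, -⟩ := hc.exists_fixedPoint' hsc hsf hx₀ (edist_ne_top _ _)
  have huniq : ∀ y ∈ s, IsFixedPt f y → y = x := fun y hy hfy ↦
    hf.eq_of_isFixedPt hK hy hx hfy hfix
  refine ⟨x, hx, hfix, huniq, fun y hy ↦ ?_⟩
  obtain ⟨z, hz, hfz, hlim, -⟩ := hc.exists_fixedPoint' hsc hsf hy (edist_ne_top _ _)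
  rwa [huniq z hz hfz] at hlim

end FixedPoint

theorem abs_clip_sub_clip_le (x y a b : ℝ) : |clip x a b - clip y a b| ≤ |x - y| :=
  (abs_min_sub_min_le_max _ _ _ _).trans <|
    max_le (abs_max_sub_max_le_abs x y a) (by simp)

theorem clip_mem_Icc {a b : ℝ} (hab : a ≤ b) (x : ℝ) : clip x a b ∈ Icc a b :=
  ⟨le_min (le_max_right _ _) hab, min_le_right _ _⟩

theorem abs_sentinelD_sub_le {αmin α₀ ηup ηdown θ L : ℝ} {D : ℝ → ℝ} (hηup : ηup ≤ 1)
    (hηdown : 0 ≤ ηdown) {α β : ℝ} (hD : |D α - D β| ≤ L * |α - β|) :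
    |sentinelD αmin α₀ ηup ηdown θ D α - sentinelD αmin α₀ ηup ηdown θ D β| ≤
      ((1 - ηup) + ηdown * L) * |α - β| := by
  have hpos : |max (D α - θ) 0 - max (D β - θ) 0| ≤ L * |α - β| :=
    (abs_max_sub_max_le_abs _ _ _).trans (by rwa [sub_sub_sub_cancel_right])
  calc _ ≤ |(1 - ηup) * (α - β) - ηdown * (max (D α - θ) 0 - max (D β - θ) 0)| := by
        refine (abs_clip_sub_clip_le _ _ αmin 1).trans_eq (congrArg abs ?_)
        ring
    _ ≤ (1 - ηup) * |α - β| + ηdown * |max (D α - θ) 0 - max (D β - θ) 0| := by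
        refine (abs_sub _ _).trans_eq ?_
        rw [abs_mul, abs_mul, abs_of_nonneg (sub_nonneg.2 hηup), abs_of_nonneg hηdown]
    _ ≤ (1 - ηup) * |α - β| + ηdown * (L * |α - β|) := by gcongr
    _ = ((1 - ηup) + ηdown * L) * |α - β| := by ring

theorem stmt10_general (αmin α₀ ηup ηdown θ L : ℝ) (D : ℝ → ℝ)
    (h2 : αmin < α₀) (h3 : α₀ ≤ 1)
    (h5 : ηup < 1) (h6 : 0 < ηdown)
    (hDLip : ∀ α ∈ Set.Icc αmin 1, ∀ β ∈ Set.Icc αmin 1, |D α - D β| ≤ L * |α - β|)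
    (hgain : ηdown * L < ηup) :
    ((1 - ηup) + ηdown * L < 1) ∧
    (∀ α ∈ Set.Icc αmin 1, ∀ β ∈ Set.Icc αmin 1,
      |sentinelD αmin α₀ ηup ηdown θ D α - sentinelD αmin α₀ ηup ηdown θ D β| ≤
        ((1 - ηup) + ηdown * L) * |α - β|) ∧
    ∃ αstar ∈ Set.Icc αmin 1,
      sentinelD αmin α₀ ηup ηdown θ D αstar = αstar ∧
      (∀ β ∈ Set.Icc αmin 1, sentinelD αmin α₀ ηup ηdown θ D β = β → β = αstar) ∧
      ∀ α₀' ∈ Set.Icc αmin 1,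
        Filter.Tendsto (fun t : ℕ => (sentinelD αmin α₀ ηup ηdown θ D)^[t] α₀')
          Filter.atTop (nhds αstar) := by
  have hab : αmin ≤ 1 := h2.le.trans h3
  have hk : (1 - ηup) + ηdown * L < 1 := by linarith
  have hlip : ∀ α ∈ Icc αmin 1, ∀ β ∈ Icc αmin 1,
      |sentinelD αmin α₀ ηup ηdown θ D α - sentinelD αmin α₀ ηup ηdown θ D β| ≤
        ((1 - ηup) + ηdown * L) * |α - β| := fun α hα β hβ ↦
    abs_sentinelD_sub_le h5.le h6.le (hDLip α hα β hβ)
  refine ⟨hk, hlip, ?_⟩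
  have hLipOn : LipschitzOnWith ((1 - ηup) + ηdown * L).toNNReal
      (sentinelD αmin α₀ ηup ηdown θ D) (Icc αmin 1) :=
    .of_dist_le_mul fun α hα β hβ ↦ by
      simpa only [Real.dist_eq] using
        (hlip α hα β hβ).trans (by gcongr; exact Real.le_coe_toNNReal _)
  exact hLipOn.exists_unique_isFixedPt_tendsto_iterate (Real.toNNReal_lt_one.2 hk)
    isClosed_Icc.isComplete (fun _ _ ↦ clip_mem_Icc hab _) ⟨αmin, left_mem_Icc.2 hab⟩

/-- Suppose the discomfort `D : [α_min,1] → [0,∞)` is `L`-Lipschitz and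
`η↓·L < η↑`.  Then the sentinel update `T` is a contraction on `[α_min, 1]` with Lipschitz
constant at most `(1 − η↑) + η↓·L < 1`, and hence `T` has a unique fixed point in
`[α_min, 1]` to which all iterates converge. -/
theorem stmt10 (αmin α₀ ηup ηdown θ L : ℝ) (D : ℝ → ℝ)
    (h1 : 0 < αmin) (h2 : αmin < α₀) (h3 : α₀ ≤ 1)
    (h4 : 0 < ηup) (h5 : ηup < 1) (h6 : 0 < ηdown) (h7 : 0 ≤ θ) (hL : 0 ≤ L)
    (hD0 : ∀ α ∈ Set.Icc αmin 1, 0 ≤ D α)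
    (hDLip : ∀ α ∈ Set.Icc αmin 1, ∀ β ∈ Set.Icc αmin 1, |D α - D β| ≤ L * |α - β|)
    (hgain : ηdown * L < ηup) :
    ((1 - ηup) + ηdown * L < 1) ∧
    (∀ α ∈ Set.Icc αmin 1, ∀ β ∈ Set.Icc αmin 1,
      |sentinelD αmin α₀ ηup ηdown θ D α - sentinelD αmin α₀ ηup ηdown θ D β| ≤
        ((1 - ηup) + ηdown * L) * |α - β|) ∧
    ∃ αstar ∈ Set.Icc αmin 1,
      sentinelD αmin α₀ ηup ηdown θ D αstar = αstar ∧
      (∀ β ∈ Set.Icc αmin 1, sentinelD αmin α₀ ηup ηdown θ D β = β → β = αstar) ∧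
      ∀ α₀' ∈ Set.Icc αmin 1,
        Filter.Tendsto (fun t : ℕ => (sentinelD αmin α₀ ηup ηdown θ D)^[t] α₀')
          Filter.atTop (nhds αstar) :=
  stmt10_general αmin α₀ ηup ηdown θ L D h2 h3 h5 h6 hDLip hgain
end
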